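/- arXiv:2604.22504 — 2 statements merged into one kernel-verified Lean document; each statement's English description precedes it below -/
import Mathlib

section
/- Let a finite set of 2n items consist of n positives and n negatives, all with distinct scores, arranged in some linear order by score. Suppose exactly i of the positives occupy positions among the top n of these 2n items. Then the number of concordant (positive ranked above negative) pairs is at most i(2n−i), with equality attained by the arrangement where the first n positions are i positives followed by n−i negatives and the last n positions are n−i positives followed by i negatives. -/
/-!
Split the positives `P` and the negatives `N` at the middle position. A positive in the bottom
half is never above a negative in the top half, and there are `n - i` of each, so the concordant
pairs lie in `P × N` minus a block of `(n - i)²` pairs: at most `n² - (n - i)² = i (2n - i)`.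
In the extremal arrangement every other positive–negative pair is concordant.
-/

open Finset

section Concordance

variable {α : Type*} [Fintype α] [LinearOrder α] (P N T : α → Prop)
  [DecidablePred P] [DecidablePred N] [DecidablePred T]

theorem filter_lt_subset_sdiff_product (hT : IsLowerSet {a | T a}) :
    univ.filter (fun q : α × α => P q.1 ∧ N q.2 ∧ q.1 < q.2) ⊆
      (univ.filter P ×ˢ univ.filter N) \
        (univ.filter (fun a => P a ∧ ¬T a) ×ˢ univ.filter (fun b => N b ∧ T b)) := by
  intro q hq
  simp only [mem_filter, mem_univ, true_and] at hq
  simp only [mem_sdiff, mem_product, mem_filter, mem_univ, true_and]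
  exact ⟨⟨hq.1, hq.2.1⟩, fun h => h.1.2 (hT hq.2.2.le h.2.2)⟩

theorem filter_lt_eq_sdiff_product (hT : IsLowerSet {a | T a})
    (hsorted : ∀ a b, P a → N b → (T a ∨ ¬T b) → a < b) :
    univ.filter (fun q : α × α => P q.1 ∧ N q.2 ∧ q.1 < q.2) =
      (univ.filter P ×ˢ univ.filter N) \
        (univ.filter (fun a => P a ∧ ¬T a) ×ˢ univ.filter (fun b => N b ∧ T b)) := by
  refine (filter_lt_subset_sdiff_product P N T hT).antisymm fun q hq => ?_
  simp only [mem_sdiff, mem_product, mem_filter, mem_univ, true_and] at hq ⊢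
  obtain ⟨⟨hP, hN⟩, hcut⟩ := hq
  exact ⟨hP, hN, hsorted _ _ hP hN (by tauto)⟩

theorem card_sdiff_product_filter :
    #((univ.filter P ×ˢ univ.filter N) \
        (univ.filter (fun a => P a ∧ ¬T a) ×ˢ univ.filter (fun b => N b ∧ T b))) =
      #{a | P a} * #{b | N b} - #{a | P a ∧ ¬T a} * #{b | N b ∧ T b} := by
  rw [card_sdiff_of_subset (product_subset_product (monotone_filter_right _ fun _ _ => And.left)
    (monotone_filter_right _ fun _ _ => And.left)), card_product, card_product]

theorem card_filter_lt_le (hT : IsLowerSet {a | T a}) :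
    #{q : α × α | P q.1 ∧ N q.2 ∧ q.1 < q.2} ≤
      #{a | P a} * #{b | N b} - #{a | P a ∧ ¬T a} * #{b | N b ∧ T b} :=
  (card_le_card (filter_lt_subset_sdiff_product P N T hT)).trans_eq
    (card_sdiff_product_filter P N T)

theorem card_filter_lt_eq (hT : IsLowerSet {a | T a})
    (hsorted : ∀ a b, P a → N b → (T a ∨ ¬T b) → a < b) :
    #{q : α × α | P q.1 ∧ N q.2 ∧ q.1 < q.2} =
      #{a | P a} * #{b | N b} - #{a | P a ∧ ¬T a} * #{b | N b ∧ T b} := by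
  rw [filter_lt_eq_sdiff_product P N T hT hsorted, card_sdiff_product_filter]

end Concordance

theorem Fin.isLowerSet_val_lt (m k : ℕ) : IsLowerSet {a : Fin m | (a : ℕ) < k} :=
  fun _ _ hba ha => (Fin.le_def.mp hba).trans_lt ha

theorem Fin.card_filter_val (m : ℕ) (Q : ℕ → Prop) [DecidablePred Q] :
    #{a : Fin m | Q a} = #{k ∈ range m | Q k} := by
  rw [← Nat.Iio_eq_range, ← Fin.map_valEmbedding_univ, filter_map, card_map]
  rfl

theorem card_filter_and_add_card_filter_and_not {α : Type*} [Fintype α] (P T : α → Prop)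
    [DecidablePred P] [DecidablePred T] :
    #{a | P a ∧ T a} + #{a | P a ∧ ¬T a} = #{a | P a} := by
  simpa only [filter_filter] using card_filter_add_card_filter_not (s := univ.filter P) T

theorem Nat.mul_self_sub_mul_self_sub {n i : ℕ} (hi : i ≤ n) :
    n * n - (n - i) * (n - i) = i * (2 * n - i) := by
  obtain ⟨j, rfl⟩ := Nat.exists_eq_add_of_le hi
  rw [Nat.add_sub_cancel_left, show 2 * (i + j) - i = i + 2 * j by omega,
    show (i + j) * (i + j) = i * (i + 2 * j) + j * j by ring, Nat.add_sub_cancel]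

section TopHalf

variable {n i : ℕ} (P : Fin (2 * n) → Prop) [DecidablePred P]

theorem card_filter_not_of_card_eq_half (hP : #{a | P a} = n) : #{a | ¬P a} = n := by
  have := card_filter_add_card_filter_not (s := univ) P
  rw [hP, card_univ, Fintype.card_fin] at this
  omega

theorem card_filter_and_not_val_lt (hP : #{a | P a} = n)
    (htop : #{a | P a ∧ (a : ℕ) < n} = i) : #{a | P a ∧ ¬(a : ℕ) < n} = n - i := by
  have := card_filter_and_add_card_filter_and_not P (fun a => (a : ℕ) < n)
  omega

theorem card_filter_not_and_val_lt (htop : #{a | P a ∧ (a : ℕ) < n} = i) :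
    #{a | ¬P a ∧ (a : ℕ) < n} = n - i := by
  have hsplit := card_filter_and_add_card_filter_and_not (fun a : Fin (2 * n) => (a : ℕ) < n) P
  rw [Fin.card_filter_val_lt, min_eq_right (by omega)] at hsplit
  simp only [and_comm] at hsplit
  omega

theorem card_mul_card_sub_eq (hi : i ≤ n) (hP : #{a | P a} = n)
    (htop : #{a | P a ∧ (a : ℕ) < n} = i) :
    #{a | P a} * #{b | ¬P b} - #{a | P a ∧ ¬(a : ℕ) < n} * #{b | ¬P b ∧ (b : ℕ) < n} =
      i * (2 * n - i) := by
  rw [card_filter_not_of_card_eq_half P hP, card_filter_and_not_val_lt P hP htop,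
    card_filter_not_and_val_lt P htop, hP, Nat.mul_self_sub_mul_self_sub hi]

theorem card_concordant_le (hi : i ≤ n) (hP : #{a | P a} = n)
    (htop : #{a | P a ∧ (a : ℕ) < n} = i) :
    #{q : Fin (2 * n) × Fin (2 * n) | P q.1 ∧ ¬P q.2 ∧ q.1 < q.2} ≤ i * (2 * n - i) :=
  (card_filter_lt_le P (¬P ·) _ (Fin.isLowerSet_val_lt _ n)).trans_eq
    (card_mul_card_sub_eq P hi hP htop)

theorem card_concordant_eq (hi : i ≤ n) (hP : #{a | P a} = n)
    (htop : #{a | P a ∧ (a : ℕ) < n} = i)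
    (hsorted : ∀ a b, P a → ¬P b → ((a : ℕ) < n ∨ n ≤ (b : ℕ)) → a < b) :
    #{q : Fin (2 * n) × Fin (2 * n) | P q.1 ∧ ¬P q.2 ∧ q.1 < q.2} = i * (2 * n - i) := by
  rw [card_filter_lt_eq P (¬P ·) _ (Fin.isLowerSet_val_lt _ n) fun a b ha hb hab =>
    hsorted a b ha hb (by simpa only [not_lt] using hab)]
  exact card_mul_card_sub_eq P hi hP htop

theorem card_extremal_positives (hi : i ≤ n) :
    #{a : Fin (2 * n) | (a : ℕ) < i ∨ (n ≤ (a : ℕ) ∧ (a : ℕ) < 2 * n - i)} = n := by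
  have hset : {k ∈ range (2 * n) | k < i ∨ (n ≤ k ∧ k < 2 * n - i)} =
      range i ∪ Ico n (2 * n - i) := by
    ext k; simp only [mem_filter, mem_range, mem_union, mem_Ico]; omega
  have hdisj : Disjoint (range i) (Ico n (2 * n - i)) := disjoint_left.2 fun k hk hk' => by
    simp only [mem_range, mem_Ico] at hk hk'; omega
  rw [Fin.card_filter_val _ fun k => k < i ∨ (n ≤ k ∧ k < 2 * n - i), hset,
    card_union_of_disjoint hdisj, card_range, Nat.card_Ico]
  omega

theorem card_extremal_positives_top (hi : i ≤ n) :
    #{a : Fin (2 * n) | ((a : ℕ) < i ∨ (n ≤ (a : ℕ) ∧ (a : ℕ) < 2 * n - i)) ∧ (a : ℕ) < n} =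
      i := by
  have hset : {k ∈ range (2 * n) | (k < i ∨ (n ≤ k ∧ k < 2 * n - i)) ∧ k < n} = range i := by
    ext k; simp only [mem_filter, mem_range]; omega
  rw [Fin.card_filter_val _ fun k => (k < i ∨ (n ≤ k ∧ k < 2 * n - i)) ∧ k < n, hset,
    card_range]

end TopHalf

theorem stmt_2_general (n i : ℕ) (hi : i ≤ n)
    (pos : Fin (2 * n) → Bool)
    (hpos : (Finset.univ.filter fun a : Fin (2 * n) => pos a = true).card = n)
    (htop : (Finset.univ.filter fun a : Fin (2 * n) => pos a = true ∧ (a : ℕ) < n).card = i) :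
    ((Finset.univ.filter fun q : Fin (2 * n) × Fin (2 * n) =>
        pos q.1 = true ∧ pos q.2 = false ∧ q.1 < q.2).card ≤ i * (2 * n - i)) ∧
    ((Finset.univ.filter fun q : Fin (2 * n) × Fin (2 * n) =>
        ((q.1 : ℕ) < i ∨ (n ≤ (q.1 : ℕ) ∧ (q.1 : ℕ) < 2 * n - i)) ∧
        ¬((q.2 : ℕ) < i ∨ (n ≤ (q.2 : ℕ) ∧ (q.2 : ℕ) < 2 * n - i)) ∧
        q.1 < q.2).card = i * (2 * n - i)) := by
  constructor
  · simpa only [Bool.not_eq_true] using card_concordant_le (pos · = true) hi hpos htop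
  · exact card_concordant_eq _ hi (card_extremal_positives hi) (card_extremal_positives_top hi)
      fun a b ha hb hcut => Fin.lt_def.mpr (by omega)

/-- Upper bound `i * (2n - i)` on the number of concordant (positive-above-negative)
pairs when exactly `i` of the `n` positives lie in the top `n` of `2n` items,
with equality attained by the extremal arrangement
(`i` positives, `n - i` negatives | `n - i` positives, `i` negatives). -/
theorem stmt_2 (n i : ℕ) (hn : 1 ≤ n) (hi : i ≤ n)
    (pos : Fin (2 * n) → Bool)
    (hpos : (Finset.univ.filter fun a : Fin (2 * n) => pos a = true).card = n)
    (htop : (Finset.univ.filter fun a : Fin (2 * n) => pos a = true ∧ (a : ℕ) < n).card = i) :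
    ((Finset.univ.filter fun q : Fin (2 * n) × Fin (2 * n) =>
        pos q.1 = true ∧ pos q.2 = false ∧ q.1 < q.2).card ≤ i * (2 * n - i)) ∧
    ((Finset.univ.filter fun q : Fin (2 * n) × Fin (2 * n) =>
        ((q.1 : ℕ) < i ∨ (n ≤ (q.1 : ℕ) ∧ (q.1 : ℕ) < 2 * n - i)) ∧
        ¬((q.2 : ℕ) < i ∨ (n ≤ (q.2 : ℕ) ∧ (q.2 : ℕ) < 2 * n - i)) ∧
        q.1 < q.2).card = i * (2 * n - i)) :=
  stmt_2_general n i hi pos hpos htop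
end

section
/- Let a finite set of 2n items consist of n positives and n negatives, all with distinct scores, arranged in some linear order by score. Suppose exactly i of the positives occupy positions among the top n. Then the number of concordant (positive above negative) pairs is at least i², with equality attained by the arrangement where the first n positions are n−i negatives followed by i positives and the last n positions are i negatives followed by n−i positives. -/
/-!
Every positive in the top `n` lies above every negative in the bottom `n`, so the concordant
pairs contain a product of these two sets. The first has `i` elements by hypothesis, and so
does the second: as the positives and the top `n` positions together have `2n` elements,
by inclusion–exclusion the items that are neither are as many as those that are both.
In the extremal arrangement the concordant pairs are exactly the `i` top-half positives
against the `i` bottom-half negatives.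
-/

open Finset

theorem Fin.card_filter_le_val_lt {m l u : ℕ} (hu : u ≤ m) :
    #{a : Fin m | l ≤ (a : ℕ) ∧ (a : ℕ) < u} = u - l := by
  rw [← card_map valEmbedding, map_filter', ← Nat.card_Ico l u]
  congr 1
  ext b
  simp only [mem_Ico, mem_filter, map_valEmbedding_univ, mem_Iio, valEmbedding_apply,
    Fin.exists_iff]
  grind

theorem card_filter_not_and_not_eq_card_filter_and {α : Type*} [Fintype α] (p q : α → Prop)
    [DecidablePred p] [DecidablePred q] (h : #{a | p a} + #{a | q a} = Fintype.card α) :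
    #{a | ¬p a ∧ ¬q a} = #{a | p a ∧ q a} := by
  have hp : #{a | p a ∧ q a} + #{a | p a ∧ ¬q a} = #{a | p a} := by
    rw [← filter_filter, ← filter_filter]; exact card_filter_add_card_filter_not ..
  have hnq : #{a | ¬q a ∧ p a} + #{a | ¬q a ∧ ¬p a} = #{a | ¬q a} := by
    rw [← filter_filter, ← filter_filter]; exact card_filter_add_card_filter_not ..
  have hq : #{a | q a} + #{a | ¬q a} = Fintype.card α := card_filter_add_card_filter_not ..
  simp only [and_comm (a := ¬q _)] at hnq
  omega

theorem card_mul_card_le_card_filter_lt {α : Type*} [Fintype α] [LT α]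
    [DecidableRel (α := α) (· < ·)] (p r t : α → Prop) [DecidablePred p] [DecidablePred r]
    [DecidablePred t] (ht : ∀ a b, t a → ¬t b → a < b) :
    #{a | p a ∧ t a} * #{b | r b ∧ ¬t b} ≤ #{q : α × α | p q.1 ∧ r q.2 ∧ q.1 < q.2} := by
  rw [← card_product]
  refine card_le_card fun q hq => ?_
  simp only [mem_product, mem_filter, mem_univ, true_and] at hq ⊢
  exact ⟨hq.1.1, hq.2.1, ht _ _ hq.1.2 hq.2.2⟩

theorem card_concordant_extremal (n i : ℕ) (hi : i ≤ n) :
    #{q : Fin (2 * n) × Fin (2 * n) |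
        ((n - i ≤ (q.1 : ℕ) ∧ (q.1 : ℕ) < n) ∨ n + i ≤ (q.1 : ℕ)) ∧
        ¬((n - i ≤ (q.2 : ℕ) ∧ (q.2 : ℕ) < n) ∨ n + i ≤ (q.2 : ℕ)) ∧
        q.1 < q.2} = i ^ 2 := by
  have hpairs : #{q : Fin (2 * n) × Fin (2 * n) |
        ((n - i ≤ (q.1 : ℕ) ∧ (q.1 : ℕ) < n) ∨ n + i ≤ (q.1 : ℕ)) ∧
        ¬((n - i ≤ (q.2 : ℕ) ∧ (q.2 : ℕ) < n) ∨ n + i ≤ (q.2 : ℕ)) ∧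
        q.1 < q.2} =
      #(({a : Fin (2 * n) | n - i ≤ (a : ℕ) ∧ (a : ℕ) < n} : Finset _) ×ˢ
        ({b : Fin (2 * n) | n ≤ (b : ℕ) ∧ (b : ℕ) < n + i} : Finset _)) := by
    congr 1
    ext q
    have := q.2.isLt
    simp only [mem_filter, mem_univ, true_and, mem_product, Fin.lt_def]
    omega
  rw [hpairs, card_product, Fin.card_filter_le_val_lt (by omega),
    Fin.card_filter_le_val_lt (by omega), Nat.sub_sub_self hi, Nat.add_sub_cancel_left, sq]

theorem stmt_3_general (n i : ℕ) (hi : i ≤ n)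
    (pos : Fin (2 * n) → Bool)
    (hpos : (Finset.univ.filter fun a : Fin (2 * n) => pos a = true).card = n)
    (htop : (Finset.univ.filter fun a : Fin (2 * n) => pos a = true ∧ (a : ℕ) < n).card = i) :
    (i ^ 2 ≤ (Finset.univ.filter fun q : Fin (2 * n) × Fin (2 * n) =>
        pos q.1 = true ∧ pos q.2 = false ∧ q.1 < q.2).card) ∧
    ((Finset.univ.filter fun q : Fin (2 * n) × Fin (2 * n) =>
        ((n - i ≤ (q.1 : ℕ) ∧ (q.1 : ℕ) < n) ∨ n + i ≤ (q.1 : ℕ)) ∧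
        ¬((n - i ≤ (q.2 : ℕ) ∧ (q.2 : ℕ) < n) ∨ n + i ≤ (q.2 : ℕ)) ∧
        q.1 < q.2).card = i ^ 2) := by
  refine ⟨?_, card_concordant_extremal n i hi⟩
  have htop_card : #{a : Fin (2 * n) | (a : ℕ) < n} = n := by
    rw [Fin.card_filter_val_lt]; omega
  have hbottom : #{a : Fin (2 * n) | pos a = false ∧ ¬(a : ℕ) < n} = i := by
    simp only [← Bool.not_eq_true]
    rw [card_filter_not_and_not_eq_card_filter_and _ _
      (by rw [hpos, htop_card, Fintype.card_fin]; omega), htop]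
  have hconcordant := card_mul_card_le_card_filter_lt (fun a => pos a = true)
    (fun b => pos b = false) (fun a : Fin (2 * n) => (a : ℕ) < n)
    (fun a b ha hb => by rw [Fin.lt_def]; omega)
  rwa [htop, hbottom, ← sq] at hconcordant

/-- Lower bound `i ^ 2` on the number of concordant (positive-above-negative)
pairs when exactly `i` of the `n` positives lie in the top `n` of `2n` items,
with equality attained by the extremal arrangement
(`n - i` negatives, `i` positives | `i` negatives, `n - i` positives). -/
theorem stmt_3 (n i : ℕ) (hn : 1 ≤ n) (hi : i ≤ n)
    (pos : Fin (2 * n) → Bool)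
    (hpos : (Finset.univ.filter fun a : Fin (2 * n) => pos a = true).card = n)
    (htop : (Finset.univ.filter fun a : Fin (2 * n) => pos a = true ∧ (a : ℕ) < n).card = i) :
    (i ^ 2 ≤ (Finset.univ.filter fun q : Fin (2 * n) × Fin (2 * n) =>
        pos q.1 = true ∧ pos q.2 = false ∧ q.1 < q.2).card) ∧
    ((Finset.univ.filter fun q : Fin (2 * n) × Fin (2 * n) =>
        ((n - i ≤ (q.1 : ℕ) ∧ (q.1 : ℕ) < n) ∨ n + i ≤ (q.1 : ℕ)) ∧
        ¬((n - i ≤ (q.2 : ℕ) ∧ (q.2 : ℕ) < n) ∨ n + i ≤ (q.2 : ℕ)) ∧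
        q.1 < q.2).card = i ^ 2) :=
  stmt_3_general n i hi pos hpos htop
end
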